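/- (Nonlocality of the W-state spatiotemporal correlations) Let γ₊ = (1 + 1/√2)/6 and γ₋ = (1 − 1/√2)/6, and define the conditional probability distribution T(a,b|x,y) for x, y ∈ {1, 2}, a ∈ {+, −, ∅}, b ∈ {+, −} by: T(a,b|x,y) = γ₋ if either (a = ∅ and b = −), or (a ∈ {+, −} and b = a and (x,y) ≠ (2,2)), or (a ∈ {+, −} and b ≠ a with b ∈ {+, −} and (x,y) = (2,2)); and T(a,b|x,y) = γ₊ in all other cases. Then T admits no local hidden variable model. -/

import Mathlib

/-!
**Statement 19 (nonlocality of the W-state spatiotemporal correlations).**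

Alice has 2 settings (indexed by `Fin 2`, with index `0` ↔ setting `1` and index `1` ↔
setting `2`) and 3 outcomes (indexed by `Fin 3`, with `0` ↔ `+`, `1` ↔ `−`, `2` ↔ `∅`);
Bob has 2 settings and 2 outcomes (`0` ↔ `+`, `1` ↔ `−`).  With `γ₊ = (1 + 1/√2)/6` and
`γ₋ = (1 − 1/√2)/6`, the correlation `T(a,b|x,y)` defined below admits no local hidden
variable model.
-/

/-- `P` (written `P a b x y` for `P(a,b|x,y)`) admits a local hidden variable model. -/
def HasLHVModel {ka kb oa ob : ℕ}
    (P : Fin oa → Fin ob → Fin ka → Fin kb → ℝ) : Prop :=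
  ∃ (Ω : Type) (_ : MeasurableSpace Ω) (μ : MeasureTheory.Measure Ω),
    MeasureTheory.IsProbabilityMeasure μ ∧
    ∃ (pA : Fin ka → Fin oa → Ω → ℝ) (pB : Fin kb → Fin ob → Ω → ℝ),
      (∀ x a, Measurable (pA x a)) ∧ (∀ y b, Measurable (pB y b)) ∧
      (∀ x a ω, 0 ≤ pA x a ω) ∧ (∀ y b ω, 0 ≤ pB y b ω) ∧
      (∀ x ω, (∑ a, pA x a ω) = 1) ∧ (∀ y ω, (∑ b, pB y b ω) = 1) ∧
      (∀ a b x y, P a b x y = ∫ ω, pA x a ω * pB y b ω ∂μ)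

/-- `γ₋ = (1 − 1/√2)/6`. -/
noncomputable def γm : ℝ := (1 - 1 / Real.sqrt 2) / 6

/-- `γ₊ = (1 + 1/√2)/6`. -/
noncomputable def γp : ℝ := (1 + 1 / Real.sqrt 2) / 6

/-- The W-state spatiotemporal correlation table: `T a b x y = γ₋` if either (`a = ∅` and
`b = −`), or (`a ∈ {+,−}`, `b = a` and `(x,y) ≠ (2,2)`), or (`a ∈ {+,−}`, `b ≠ a` and
`(x,y) = (2,2)`); and `T a b x y = γ₊` otherwise. -/
noncomputable def T (a : Fin 3) (b : Fin 2) (x y : Fin 2) : ℝ :=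
  if (a = 2 ∧ b = 1) ∨
     ((a = 0 ∧ b = 0 ∨ a = 1 ∧ b = 1) ∧ ¬(x = 1 ∧ y = 1)) ∨
     ((a = 0 ∧ b = 1 ∨ a = 1 ∧ b = 0) ∧ (x = 1 ∧ y = 1))
  then γm else γp

/-!
Bin Alice's no-click outcome `∅` with `−`, so that both parties have `±1`-valued
observables. Any local hidden variable model then satisfies the CHSH inequality
`|E₁₁ + E₁₂ + E₂₁ - E₂₂| ≤ 2`, since pointwise in `ω` the response functions give numbers
`a₁, a₂, b₁, b₂ ∈ [-1, 1]` with `|a₁ (b₁ + b₂) + a₂ (b₁ - b₂)| ≤ |b₁ + b₂| + |b₁ - b₂| ≤ 2`.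
For `T` one computes `Eₓᵧ = -3 (γ₊ - γ₋)` for `(x, y) ≠ (2, 2)` and `E₂₂ = γ₊ - γ₋`, so the
CHSH expression is `-10 (γ₊ - γ₋) = -5√2/3 < -2`.
-/

open MeasureTheory

lemma abs_chsh_le_two {a₀ a₁ b₀ b₁ : ℝ} (ha₀ : |a₀| ≤ 1) (ha₁ : |a₁| ≤ 1) (hb₀ : |b₀| ≤ 1)
    (hb₁ : |b₁| ≤ 1) : |a₀ * b₀ + a₀ * b₁ + a₁ * b₀ - a₁ * b₁| ≤ 2 := by
  have hsum : |b₀ + b₁| + |b₀ - b₁| ≤ 2 := by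
    rcases abs_cases (b₀ + b₁) with ⟨h, _⟩ | ⟨h, _⟩ <;>
    rcases abs_cases (b₀ - b₁) with ⟨h', _⟩ | ⟨h', _⟩ <;>
    rw [h, h'] <;> linarith [abs_le.1 hb₀, abs_le.1 hb₁]
  calc |a₀ * b₀ + a₀ * b₁ + a₁ * b₀ - a₁ * b₁| = |a₀ * (b₀ + b₁) + a₁ * (b₀ - b₁)| := by ring_nf
    _ ≤ |a₀| * |b₀ + b₁| + |a₁| * |b₀ - b₁| := by
        rw [← abs_mul, ← abs_mul]; exact abs_add_le _ _
    _ ≤ 1 * |b₀ + b₁| + 1 * |b₀ - b₁| := by gcongr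
    _ ≤ 2 := by linarith

lemma abs_sum_mul_le_one {ι : Type*} [Fintype ι] {s p : ι → ℝ} (hs : ∀ i, |s i| ≤ 1)
    (hp : ∀ i, 0 ≤ p i) (hp₁ : ∑ i, p i = 1) : |∑ i, s i * p i| ≤ 1 :=
  calc |∑ i, s i * p i| ≤ ∑ i, |s i| * p i := by
        simpa only [abs_mul, abs_of_nonneg (hp _)] using
          Finset.abs_sum_le_sum_abs (fun i ↦ s i * p i) Finset.univ
    _ ≤ ∑ i, p i := Finset.sum_le_sum fun i _ ↦ mul_le_of_le_one_left (hp i) (hs i)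
    _ = 1 := hp₁

section Integral

variable {Ω : Type*} [MeasurableSpace Ω] {μ : Measure Ω}

lemma integrable_mul_of_abs_le_one [IsFiniteMeasure μ] {f g : Ω → ℝ}
    (hf : AEStronglyMeasurable f μ) (hg : AEStronglyMeasurable g μ)
    (hf₁ : ∀ ω, |f ω| ≤ 1) (hg₁ : ∀ ω, |g ω| ≤ 1) : Integrable (fun ω ↦ f ω * g ω) μ :=
  .of_bound (hf.mul hg) 1 <| .of_forall fun ω ↦ by
    rw [Real.norm_eq_abs, abs_mul]
    exact mul_le_one₀ (hf₁ ω) (abs_nonneg _) (hg₁ ω)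

lemma abs_integral_chsh_le_two [IsProbabilityMeasure μ] {ι κ : Type*}
    {A : ι → Ω → ℝ} {B : κ → Ω → ℝ}
    (hA : ∀ x, AEStronglyMeasurable (A x) μ) (hB : ∀ y, AEStronglyMeasurable (B y) μ)
    (hA₁ : ∀ x ω, |A x ω| ≤ 1) (hB₁ : ∀ y ω, |B y ω| ≤ 1) (x₀ x₁ : ι) (y₀ y₁ : κ) :
    |(∫ ω, A x₀ ω * B y₀ ω ∂μ) + (∫ ω, A x₀ ω * B y₁ ω ∂μ) + (∫ ω, A x₁ ω * B y₀ ω ∂μ)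
      - ∫ ω, A x₁ ω * B y₁ ω ∂μ| ≤ 2 := by
  have hint : ∀ x y, Integrable (fun ω ↦ A x ω * B y ω) μ := fun x y ↦
    integrable_mul_of_abs_le_one (hA x) (hB y) (hA₁ x) (hB₁ y)
  have hsplit : ∫ ω, (A x₀ ω * B y₀ ω + A x₀ ω * B y₁ ω + A x₁ ω * B y₀ ω
        - A x₁ ω * B y₁ ω) ∂μ = (∫ ω, A x₀ ω * B y₀ ω ∂μ) + (∫ ω, A x₀ ω * B y₁ ω ∂μ)
        + (∫ ω, A x₁ ω * B y₀ ω ∂μ) - ∫ ω, A x₁ ω * B y₁ ω ∂μ := by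
    have h₂ : Integrable (fun ω ↦ A x₀ ω * B y₀ ω + A x₀ ω * B y₁ ω) μ :=
      (hint x₀ y₀).add (hint x₀ y₁)
    have h₃ : Integrable (fun ω ↦ A x₀ ω * B y₀ ω + A x₀ ω * B y₁ ω + A x₁ ω * B y₀ ω) μ :=
      h₂.add (hint x₁ y₀)
    rw [integral_sub h₃ (hint x₁ y₁), integral_add h₂ (hint x₁ y₀),
      integral_add (hint x₀ y₀) (hint x₀ y₁)]
  rw [← hsplit]
  simpa using norm_integral_le_of_norm_le_const (μ := μ) <| .of_forall fun ω ↦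
    (Real.norm_eq_abs _).trans_le <| abs_chsh_le_two (hA₁ x₀ ω) (hA₁ x₁ ω) (hB₁ y₀ ω) (hB₁ y₁ ω)

end Integral

def correlator {ka kb oa ob : ℕ} (P : Fin oa → Fin ob → Fin ka → Fin kb → ℝ)
    (sA : Fin oa → ℝ) (sB : Fin ob → ℝ) (x : Fin ka) (y : Fin kb) : ℝ :=
  ∑ a, ∑ b, sA a * sB b * P a b x y

theorem HasLHVModel.abs_chsh_le_two {ka kb oa ob : ℕ}
    {P : Fin oa → Fin ob → Fin ka → Fin kb → ℝ} (hP : HasLHVModel P)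
    {sA : Fin oa → ℝ} {sB : Fin ob → ℝ} (hsA : ∀ a, |sA a| ≤ 1) (hsB : ∀ b, |sB b| ≤ 1)
    (x₀ x₁ : Fin ka) (y₀ y₁ : Fin kb) :
    |correlator P sA sB x₀ y₀ + correlator P sA sB x₀ y₁ + correlator P sA sB x₁ y₀
      - correlator P sA sB x₁ y₁| ≤ 2 := by
  obtain ⟨Ω, _, μ, _, pA, pB, hmA, hmB, hA₀, hB₀, hA₁, hB₁, hP⟩ := hP
  set A : Fin ka → Ω → ℝ := fun x ω ↦ ∑ a, sA a * pA x a ω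
  set B : Fin kb → Ω → ℝ := fun y ω ↦ ∑ b, sB b * pB y b ω
  have hmeasA : ∀ x, AEStronglyMeasurable (A x) μ := fun x ↦
    (Finset.measurable_sum _ fun a _ ↦ (hmA x a).const_mul _).aestronglyMeasurable
  have hmeasB : ∀ y, AEStronglyMeasurable (B y) μ := fun y ↦
    (Finset.measurable_sum _ fun b _ ↦ (hmB y b).const_mul _).aestronglyMeasurable
  have hpA : ∀ x a ω, |pA x a ω| ≤ 1 := fun x a ω ↦ by
    simpa [abs_of_nonneg (hA₀ x a ω), hA₁ x ω] using
      Finset.single_le_sum (fun a _ ↦ hA₀ x a ω) (Finset.mem_univ a)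
  have hpB : ∀ y b ω, |pB y b ω| ≤ 1 := fun y b ω ↦ by
    simpa [abs_of_nonneg (hB₀ y b ω), hB₁ y ω] using
      Finset.single_le_sum (fun b _ ↦ hB₀ y b ω) (Finset.mem_univ b)
  have hcorr : ∀ x y, correlator P sA sB x y = ∫ ω, A x ω * B y ω ∂μ := fun x y ↦ by
    have hint : ∀ a b, Integrable (fun ω ↦ sA a * sB b * (pA x a ω * pB y b ω)) μ :=
      fun a b ↦ (integrable_mul_of_abs_le_one (hmA x a).aestronglyMeasurable
        (hmB y b).aestronglyMeasurable (hpA x a) (hpB y b)).const_mul _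
    calc correlator P sA sB x y = ∑ a, ∑ b, ∫ ω, sA a * sB b * (pA x a ω * pB y b ω) ∂μ := by
          simp only [correlator, hP, integral_const_mul]
      _ = ∫ ω, ∑ a, ∑ b, sA a * sB b * (pA x a ω * pB y b ω) ∂μ := by
          rw [integral_finsetSum _ fun a _ ↦ integrable_finsetSum _ fun b _ ↦ hint a b]
          exact Finset.sum_congr rfl fun a _ ↦
            (integral_finsetSum _ fun b _ ↦ hint a b).symm
      _ = ∫ ω, A x ω * B y ω ∂μ := by
          simp only [A, B, Finset.sum_mul_sum, mul_mul_mul_comm]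
  simp only [hcorr]
  exact abs_integral_chsh_le_two hmeasA hmeasB
    (fun x ω ↦ abs_sum_mul_le_one hsA (hA₀ x · ω) (hA₁ x ω))
    (fun y ω ↦ abs_sum_mul_le_one hsB (hB₀ y · ω) (hB₁ y ω)) x₀ x₁ y₀ y₁

lemma γp_sub_γm : γp - γm = √2 / 6 := by
  have h : 1 / √2 = √2 / 2 := by field_simp; rw [Real.sq_sqrt zero_le_two]
  rw [γp, γm, h]; ring

def aliceValue : Fin 3 → ℝ := ![1, -1, -1]

def bobValue : Fin 2 → ℝ := ![1, -1]

lemma correlator_T_of_ne {x y : Fin 2} (hxy : ¬(x = 1 ∧ y = 1)) :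
    correlator T aliceValue bobValue x y = -3 * (γp - γm) := by
  simp [correlator, T, aliceValue, bobValue, Fin.sum_univ_succ, hxy]
  ring

lemma correlator_T_one_one : correlator T aliceValue bobValue 1 1 = γp - γm := by
  simp [correlator, T, aliceValue, bobValue, Fin.sum_univ_succ]
  ring

theorem w_state_spatiotemporal_correlations_nonlocal : ¬ HasLHVModel T := by
  intro hT
  have hchsh := hT.abs_chsh_le_two (sA := aliceValue) (sB := bobValue)
    (by simp [Fin.forall_fin_succ, aliceValue]) (by simp [Fin.forall_fin_succ, bobValue]) 0 1 0 1
  rw [correlator_T_of_ne (by decide), correlator_T_of_ne (by decide),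
    correlator_T_of_ne (by decide), correlator_T_one_one, γp_sub_γm] at hchsh
  have hsqrt : (6 : ℝ) < 5 * √2 := by
    nlinarith [Real.sq_sqrt (zero_le_two : (0 : ℝ) ≤ 2), Real.sqrt_nonneg 2]
  rw [abs_le] at hchsh
  linarith [hchsh.1]
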